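/- arXiv:1602.05032 — 6 statements merged into one kernel-verified Lean document; each statement's English description precedes it below -/
import Mathlib

section
/- A word λ = λ₁λ₂⋯λₙ over F_q is aperiodic (all n cyclic rotations of λ are distinct) if and only if the element γ(λ) = λ₁α + λ₂α^q + λ₃α^{q²} + ⋯ + λₙα^{q^{n-1}} is a root of an irreducible polynomial of degree n over F_q, where {α, α^q, …, α^{q^{n-1}}} is a normal basis of F_{q^n} over F_q. -/
/-!
The Frobenius `x ↦ x ^ q` generates `Gal(F_{q^n}/F_q)`, and its `k`-th power sends
`γ(λ) = ∑ λᵢ α^{qⁱ}` to `γ` of the word rotated by `k`, because it permutes the normal basis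
cyclically. The degree of the minimal polynomial of `γ` is the size of its Galois orbit, so it
equals `n` exactly when the `n` conjugates `γ^{q^k}` are distinct, i.e. when the `n` rotations
of `λ` are distinct.
-/

open Polynomial FiniteField Function

theorem Set.ncard_range_eq_natCard_iff {α β : Type*} [Finite α] {f : α → β} :
    (Set.range f).ncard = Nat.card α ↔ Injective f := by
  rw [← Set.image_univ, ← Set.ncard_univ, Set.ncard_image_iff, Set.injOn_univ]

theorem AlgEquiv.pow_apply_sum_smul_pow_apply {R A : Type*} [CommSemiring R] [Semiring A]
    [Algebra R A] {σ : A ≃ₐ[R] A} {n : ℕ} [NeZero n] (hσ : σ ^ n = 1) (c : Fin n → R) (a : A)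
    (k : Fin n) :
    (σ ^ (k : ℕ)) (∑ i, c i • (σ ^ (i : ℕ)) a) = ∑ j, c (j - k) • (σ ^ (j : ℕ)) a := by
  have hshift (i : Fin n) : (σ ^ (k : ℕ)) ((σ ^ (i : ℕ)) a) = (σ ^ ((i + k : Fin n) : ℕ)) a := by
    rw [← AlgEquiv.mul_apply, ← pow_add, Fin.val_add, ← pow_eq_pow_mod _ hσ, add_comm]
  simp only [map_sum, map_smul, hshift]
  exact Fintype.sum_equiv (Equiv.addRight k) _ _ fun i => by simp

section Galois

variable {F E : Type*} [Field F] [Field E] [Algebra F E]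

theorem rootSet_minpoly_eq_orbit [Normal F E] (γ : E) :
    (minpoly F γ).rootSet E = MulAction.orbit Gal(E/F) γ := by
  ext y
  rw [← isConjRoot_iff_mem_minpoly_rootSet (Normal.isIntegral inferInstance γ), IsConjRoot.comm,
    isConjRoot_iff_orbitRel]
  rfl

theorem natDegree_minpoly_eq_ncard_orbit [IsGalois F E] (γ : E) :
    (minpoly F γ).natDegree = (MulAction.orbit Gal(E/F) γ).ncard := by
  rw [← rootSet_minpoly_eq_orbit, Set.ncard_eq_toFinset_card', Set.toFinset_card,
    card_rootSet_eq_natDegree (IsGalois.separable F γ) (IsGalois.splits F γ)]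

variable [Fintype F] [Finite E]

theorem orbit_eq_range_frobeniusAlgEquivOfAlgebraic_pow (γ : E) :
    MulAction.orbit Gal(E/F) γ =
      Set.range fun k : Fin (Module.finrank F E) =>
        (frobeniusAlgEquivOfAlgebraic F E ^ (k : ℕ)) γ :=
  ((bijective_frobeniusAlgEquivOfAlgebraic_pow F E).surjective.range_comp fun σ => σ γ).symm

theorem natDegree_minpoly_eq_finrank_iff_injective_frobenius_pow (γ : E) :
    (minpoly F γ).natDegree = Module.finrank F E ↔
      Injective fun k : Fin (Module.finrank F E) =>
        (frobeniusAlgEquivOfAlgebraic F E ^ (k : ℕ)) γ := by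
  rw [natDegree_minpoly_eq_ncard_orbit, orbit_eq_range_frobeniusAlgEquivOfAlgebraic_pow,
    ← Set.ncard_range_eq_natCard_iff, Nat.card_fin]

end Galois

theorem stmt0_general {F E : Type*} [Field F] [Fintype F] [Field E] [Algebra F E]
    (n : ℕ) (hdim : Module.finrank F E = n)
    (α : E) (b : Module.Basis (Fin n) F E)
    (hb : ∀ i : Fin n, b i = α ^ (Fintype.card F) ^ (i : ℕ))
    (lam : Fin n → F) :
    (Function.Injective fun k : Fin n => fun i : Fin n => lam (i + k)) ↔
      (minpoly F (∑ i : Fin n, lam i • α ^ (Fintype.card F) ^ (i : ℕ))).natDegree = n := by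
  have : Module.Finite F E := .of_basis b
  have : Finite E := Module.finite_of_finite F
  subst hdim
  have : NeZero (Module.finrank F E) := ⟨Module.finrank_pos.ne'⟩
  set σ := frobeniusAlgEquivOfAlgebraic F E
  have hσ : σ ^ Module.finrank F E = 1 := by
    rw [← orderOf_frobeniusAlgEquivOfAlgebraic, pow_orderOf_eq_one]
  have hpow (i : ℕ) : α ^ Fintype.card F ^ i = (σ ^ i) α := by
    rw [AlgEquiv.coe_pow, coe_frobeniusAlgEquivOfAlgebraic_iterate]
  have hrot (k : Fin (Module.finrank F E)) :
      (σ ^ (k : ℕ)) (∑ i, lam i • α ^ Fintype.card F ^ (i : ℕ)) =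
        b.equivFun.symm fun j => lam (j - k) := by
    simp only [hpow, AlgEquiv.pow_apply_sum_smul_pow_apply hσ, Module.Basis.equivFun_symm_apply,
      hb]
  rw [natDegree_minpoly_eq_finrank_iff_injective_frobenius_pow, funext hrot,
    ← comp_def b.equivFun.symm, b.equivFun.symm.injective.of_comp_iff,
    ← (Equiv.neg _).injective_comp]
  simp only [comp_def, Equiv.neg_apply, sub_eq_add_neg]

/-- A word `lam` over `F_q` is aperiodic (all `n` cyclic rotations distinct) iff
`γ(lam) = ∑ lam i • α^(q^i)` is a root of an irreducible polynomial of degree `n`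
(i.e. its minimal polynomial has degree `n`), where the `α^(q^i)` form a normal basis. -/
theorem stmt0 {F E : Type*} [Field F] [Fintype F] [Field E] [Algebra F E]
    (n : ℕ) (hn : 0 < n) (hdim : Module.finrank F E = n)
    (α : E) (b : Module.Basis (Fin n) F E)
    (hb : ∀ i : Fin n, b i = α ^ (Fintype.card F) ^ (i : ℕ))
    (lam : Fin n → F) :
    (Function.Injective fun k : Fin n => fun i : Fin n => lam (i + k)) ↔
      (minpoly F (∑ i : Fin n, lam i • α ^ (Fintype.card F) ^ (i : ℕ))).natDegree = n :=
  stmt0_general n hdim α b hb lam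
end

section
/- Two aperiodic words λ, μ ∈ F_q^n are cyclic rotations of each other if and only if γ(λ) and γ(μ) have the same minimal polynomial over F_q, where γ(λ) = λ₁α + λ₂α^q + ⋯ + λₙα^{q^{n-1}} for a fixed normal basis {α, α^q, …, α^{q^{n-1}}} of F_{q^n}. -/
/-!
In the normal basis `α, α^q, …, α^(q^(n-1))` the Frobenius `x ↦ x^q` acts on coordinates by a
cyclic shift, so `γ` turns rotations of words into powers of the Frobenius. These powers make up
the whole Galois group, two elements have the same minimal polynomial iff they are Galois
conjugate, and `γ` is injective.
-/

open FiniteField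

theorem pow_card_pow_mod_finrank {K L : Type*} [Field K] [Fintype K] [Field L] [Algebra K L]
    [Fintype L] (x : L) (m : ℕ) :
    x ^ Fintype.card K ^ (m % Module.finrank K L) = x ^ Fintype.card K ^ m := by
  conv_rhs => rw [← Nat.mod_add_div m (Module.finrank K L), pow_add, pow_mul, pow_mul,
    ← Module.card_eq_pow_finrank, pow_card_pow]

section

variable {F E : Type*} [Field F] [Fintype F] [Field E] [Algebra F E] [Finite E] {n : ℕ}

local notation "φ" => frobeniusAlgEquivOfAlgebraic F E

theorem exists_eq_frobeniusAlgEquivOfAlgebraic_pow (hdim : Module.finrank F E = n)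
    (σ : Gal(E/F)) : ∃ k : Fin n, σ = φ ^ (k : ℕ) := by
  subst hdim
  obtain ⟨k, hk⟩ := (bijective_frobeniusAlgEquivOfAlgebraic_pow F E).2 σ
  exact ⟨k, hk.symm⟩

variable {α : E} {b : Module.Basis (Fin n) F E}

theorem frobeniusAlgEquivOfAlgebraic_pow_apply_basis
    (hb : ∀ i : Fin n, b i = α ^ Fintype.card F ^ (i : ℕ)) (i k : Fin n) :
    (φ ^ (k : ℕ)) (b i) = b (i + k) := by
  have := Fintype.ofFinite E
  have hdim : Module.finrank F E = n := by simp [Module.finrank_eq_card_basis b]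
  rw [AlgEquiv.coe_pow, coe_frobeniusAlgEquivOfAlgebraic_iterate, hb, hb, Fin.val_add]
  dsimp only
  rw [← pow_mul, ← pow_add, ← pow_card_pow_mod_finrank (K := F) α (i + k), hdim]

theorem frobeniusAlgEquivOfAlgebraic_pow_apply_equivFun_symm [NeZero n]
    (hb : ∀ i : Fin n, b i = α ^ Fintype.card F ^ (i : ℕ)) (c : Fin n → F) (k : Fin n) :
    (φ ^ (k : ℕ)) (b.equivFun.symm c) = b.equivFun.symm fun i => c (i - k) := by
  simp only [Module.Basis.equivFun_symm_apply, map_sum, map_smul,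
    frobeniusAlgEquivOfAlgebraic_pow_apply_basis hb]
  exact Fintype.sum_equiv (Equiv.addRight k) _ _ fun i => by simp

end

theorem stmt3_general {F E : Type*} [Field F] [Fintype F] [Field E] [Algebra F E]
    (n : ℕ) (hn : 0 < n) (hdim : Module.finrank F E = n)
    (α : E) (b : Module.Basis (Fin n) F E)
    (hb : ∀ i : Fin n, b i = α ^ (Fintype.card F) ^ (i : ℕ))
    (lam mu : Fin n → F) :
    (∃ k : Fin n, ∀ i : Fin n, mu i = lam (i + k)) ↔
      minpoly F (∑ i : Fin n, lam i • α ^ (Fintype.card F) ^ (i : ℕ)) =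
        minpoly F (∑ i : Fin n, mu i • α ^ (Fintype.card F) ^ (i : ℕ)) := by
  have : Module.Finite F E := .of_basis b
  have : Finite E := Module.finite_of_finite F
  have : NeZero n := ⟨hn.ne'⟩
  have hγ (c : Fin n → F) : ∑ i, c i • α ^ Fintype.card F ^ (i : ℕ) = b.equivFun.symm c := by
    simp [hb, Module.Basis.equivFun_symm_apply]
  simp only [hγ]
  constructor
  · rintro ⟨k, hk⟩
    rw [← minpoly.algEquiv_eq (frobeniusAlgEquivOfAlgebraic F E ^ (k : ℕ)) (b.equivFun.symm mu),
      frobeniusAlgEquivOfAlgebraic_pow_apply_equivFun_symm hb]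
    simp [hk]
  · intro h
    obtain ⟨σ, hσ : σ (b.equivFun.symm mu) = b.equivFun.symm lam⟩ :=
      (Normal.minpoly_eq_iff_mem_orbit E).mp h
    obtain ⟨k, rfl⟩ := exists_eq_frobeniusAlgEquivOfAlgebraic_pow hdim σ
    rw [frobeniusAlgEquivOfAlgebraic_pow_apply_equivFun_symm hb] at hσ
    exact ⟨k, fun i => by simpa using congrFun (b.equivFun.symm.injective hσ) (i + k)⟩

/-- Two aperiodic words are cyclic rotations of each other iff the corresponding
elements `γ(λ)`, `γ(μ)` (w.r.t. a fixed normal basis) have the same minimal polynomial. -/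
theorem stmt3 {F E : Type*} [Field F] [Fintype F] [Field E] [Algebra F E]
    (n : ℕ) (hn : 0 < n) (hdim : Module.finrank F E = n)
    (α : E) (b : Module.Basis (Fin n) F E)
    (hb : ∀ i : Fin n, b i = α ^ (Fintype.card F) ^ (i : ℕ))
    (lam mu : Fin n → F)
    (hlam : Function.Injective fun k : Fin n => fun i : Fin n => lam (i + k))
    (hmu : Function.Injective fun k : Fin n => fun i : Fin n => mu (i + k)) :
    (∃ k : Fin n, ∀ i : Fin n, mu i = lam (i + k)) ↔
      minpoly F (∑ i : Fin n, lam i • α ^ (Fintype.card F) ^ (i : ℕ)) =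
        minpoly F (∑ i : Fin n, mu i • α ^ (Fintype.card F) ^ (i : ℕ)) :=
  stmt3_general n hn hdim α b hb lam mu
end

section
/- The map sending a Lyndon word λ of length n over F_q to the minimal polynomial of γ(λ) = λ₁α + λ₂α^q + ⋯ + λₙα^{q^{n-1}} is a bijection from the set of Lyndon words of length n over F_q (with respect to any fixed total order on F_q) onto the set of monic irreducible polynomials of degree n over F_q. -/
/-- Lexicographically-less-than for words indexed by `Fin n`. -/
def lexLt {n : ℕ} {A : Type*} [LT A] (w v : Fin n → A) : Prop :=
  ∃ j : Fin n, (∀ i : Fin n, i < j → w i = v i) ∧ w j < v j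

/-- `w` is a Lyndon word: it is strictly lexicographically smaller than all of its
nontrivial cyclic rotations. -/
def IsLyndonWord {n : ℕ} {A : Type*} [LT A] (w : Fin n → A) : Prop :=
  ∀ k : Fin n, (k : ℕ) ≠ 0 → lexLt w (fun i => w (i + k))

/-!
The Frobenius `x ↦ x ^ q` generates `Gal(E/F)`, a cyclic group of order `n`, and it acts
on `γ(w)` by cyclically rotating the word `w`, because `α ^ q ^ n = α`. Since `E/F` is
Galois, `γ(v)` and `γ(w)` have the same minimal polynomial iff they are Galois conjugate,
i.e. iff `v` is a rotation of `w`; and `minpoly γ(w)` has degree `n` iff its `n` conjugates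
are distinct, i.e. iff the `n` rotations of `w` are distinct. A Lyndon word has distinct
rotations and is the only Lyndon word among them, while a word with distinct rotations has a
Lyndon rotation: its lexicographically least one.
-/

open Polynomial Module

theorem pow_pow_mod_of_pow_pow_eq_self {M : Type*} [Monoid M] {a : M} {c n : ℕ}
    (ha : a ^ c ^ n = a) (m : ℕ) : a ^ c ^ (m % n) = a ^ c ^ m := by
  have hper : Function.IsPeriodicPt (· ^ c) n a := by
    simpa only [Function.IsPeriodicPt, Function.IsFixedPt, pow_iterate] using ha
  simpa only [pow_iterate] using hper.iterate_mod_apply m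

section LyndonWord

variable {n : ℕ} [NeZero n] {A : Type*} [LinearOrder A]

theorem isLyndonWord_iff {w : Fin n → A} :
    IsLyndonWord w ↔ ∀ k : Fin n, k ≠ 0 → toLex w < toLex fun i => w (i + k) := by
  simp only [IsLyndonWord, Fin.val_ne_zero_iff]
  rfl

theorem IsLyndonWord.injective_rotate {w : Fin n → A} (hw : IsLyndonWord w) :
    Function.Injective fun k : Fin n => fun i => w (i + k) := by
  intro j k hjk
  by_contra hne
  have hperiod : (fun i => w (i + (j - k))) = w := funext fun i => by
    convert congrFun hjk (i - k) using 1 <;>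
      simp only [add_sub_assoc', sub_add_cancel, sub_add_eq_add_sub]
  have hlt := isLyndonWord_iff.mp hw (j - k) (sub_ne_zero.mpr hne)
  rw [hperiod] at hlt
  exact lt_irrefl _ hlt

theorem IsLyndonWord.rotate_eq_self {w : Fin n → A} {k : Fin n} (hw : IsLyndonWord w)
    (hwk : IsLyndonWord fun i => w (i + k)) : (fun i => w (i + k)) = w := by
  by_contra hne
  have hk : k ≠ 0 := by rintro rfl; simp at hne
  have h₁ := isLyndonWord_iff.mp hw k hk
  have h₂ := isLyndonWord_iff.mp hwk (-k) (neg_ne_zero.mpr hk)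
  simp only [neg_add_cancel_right] at h₂
  exact lt_asymm h₁ h₂

theorem exists_isLyndonWord_rotate {w : Fin n → A}
    (hw : Function.Injective fun k : Fin n => fun i => w (i + k)) :
    ∃ k : Fin n, IsLyndonWord fun i => w (i + k) := by
  obtain ⟨k, hk⟩ := Finite.exists_min fun k : Fin n => toLex fun i => w (i + k)
  refine ⟨k, isLyndonWord_iff.mpr fun j hj => ?_⟩
  simp only [add_assoc]
  refine (hk (j + k)).lt_of_ne fun h => hj ?_
  simpa using hw (toLex.injective h).symm

end LyndonWord

theorem exists_minpoly_eq_of_natDegree_dvd_finrank {F E : Type*} [Field F] [Field E]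
    [Algebra F E] [Finite E] {P : F[X]} (hP : P.Monic) (hirr : Irreducible P)
    (hdvd : P.natDegree ∣ finrank F E) : ∃ x : E, minpoly F x = P := by
  have : Fact (Irreducible P) := ⟨hirr⟩
  have hrank : finrank F (AdjoinRoot P) = P.natDegree := finrank_quotient_span_eq_natDegree
  obtain ⟨f⟩ := FiniteField.nonempty_algHom_of_finrank_dvd (L := E) (hrank ▸ hdvd)
  refine ⟨f (AdjoinRoot.root P), (minpoly.eq_of_irreducible_of_monic hirr ?_ hP).symm⟩
  rw [aeval_algHom_apply, AdjoinRoot.aeval_eq, AdjoinRoot.mk_self, map_zero]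

namespace FiniteField

variable {F : Type*} [Field F] [Fintype F]

local notation "q" => Fintype.card F

/-- `γ(w)` in the notation of the paper. -/
def frobeniusCombination {R : Type*} [CommRing R] [Algebra F R] {n : ℕ} (α : R)
    (w : Fin n → F) : R :=
  ∑ i, w i • α ^ q ^ (i : ℕ)

section CommRing

variable {R : Type*} [CommRing R] [Algebra F R]

theorem frobeniusAlgHom_pow_apply (k : ℕ) (x : R) : (frobeniusAlgHom F R ^ k) x = x ^ q ^ k := by
  rw [AlgHom.coe_pow, coe_frobeniusAlgHom, pow_iterate]

theorem frobeniusCombination_pow_card_pow {n : ℕ} {α : R} (hα : α ^ q ^ n = α) (w : Fin n → F)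
    (k : Fin n) :
    frobeniusCombination α w ^ q ^ (k : ℕ) = frobeniusCombination α fun i => w (i - k) := by
  have : NeZero n := ⟨k.pos.ne'⟩
  calc frobeniusCombination α w ^ q ^ (k : ℕ)
      = ∑ i, w i • (α ^ q ^ (i : ℕ)) ^ q ^ (k : ℕ) := by
        simp only [frobeniusCombination, ← frobeniusAlgHom_pow_apply, map_sum, map_smul]
    _ = ∑ i, w i • α ^ q ^ ((i + k : Fin n) : ℕ) := by
        simp only [← pow_mul, ← pow_add, Fin.val_add, pow_pow_mod_of_pow_pow_eq_self hα]
    _ = frobeniusCombination α fun i => w (i - k) :=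
        Fintype.sum_equiv (Equiv.addRight k) _ _ fun i => by simp

theorem bijective_frobeniusCombination {n : ℕ} {α : R} {b : Basis (Fin n) F R}
    (hb : ∀ i, b i = α ^ q ^ (i : ℕ)) :
    Function.Bijective (frobeniusCombination α : (Fin n → F) → R) := by
  convert b.equivFun.symm.bijective
  ext w
  simp [frobeniusCombination, Basis.equivFun_symm_apply, hb]

end CommRing

variable {E : Type*} [Field E] [Algebra F E] [Finite E]

theorem frobeniusAlgEquivOfAlgebraic_pow_apply (k : ℕ) (x : E) :
    (frobeniusAlgEquivOfAlgebraic F E ^ k) x = x ^ q ^ k := by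
  rw [AlgEquiv.coe_pow, coe_frobeniusAlgEquivOfAlgebraic_iterate]

theorem pow_card_pow_finrank (x : E) : x ^ q ^ finrank F E = x := by
  rw [← frobeniusAlgEquivOfAlgebraic_pow_apply, ← orderOf_frobeniusAlgEquivOfAlgebraic,
    pow_orderOf_eq_one, AlgEquiv.one_apply]

theorem minpoly_eq_iff_exists_eq_pow_card_pow {x y : E} :
    minpoly F y = minpoly F x ↔ ∃ k : Fin (finrank F E), y = x ^ q ^ (k : ℕ) := by
  rw [Normal.minpoly_eq_iff_mem_orbit, MulAction.mem_orbit_iff,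
    (bijective_frobeniusAlgEquivOfAlgebraic_pow F E).surjective.exists]
  simp only [AlgEquiv.smul_def, frobeniusAlgEquivOfAlgebraic_pow_apply, eq_comm]

theorem rootSet_minpoly_eq_range (x : E) :
    (minpoly F x).rootSet E = Set.range fun k : Fin (finrank F E) => x ^ q ^ (k : ℕ) := by
  ext y
  rw [← isConjRoot_iff_mem_minpoly_rootSet (IsIntegral.of_finite F x), isConjRoot_def,
    eq_comm, minpoly_eq_iff_exists_eq_pow_card_pow]
  simp only [Set.mem_range, eq_comm]

/-- The roots of `minpoly F x` in `E` are simple and are the conjugates `x ^ q ^ k`, so the degree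
counts the distinct conjugates. -/
theorem natDegree_minpoly_eq_finrank_iff (x : E) :
    (minpoly F x).natDegree = finrank F E ↔
      Function.Injective fun k : Fin (finrank F E) => x ^ q ^ (k : ℕ) := by
  classical
  have hcard : Nat.card ((minpoly F x).rootSet E) = (minpoly F x).natDegree := by
    rw [Nat.card_eq_fintype_card, card_rootSet_eq_natDegree
      (Algebra.IsSeparable.isSeparable F x) (Normal.splits inferInstance x)]
  conv_rhs => rw [← Set.injOn_univ, ← Finset.coe_univ, ← Finset.card_image_iff]
  rw [← hcard, rootSet_minpoly_eq_range, ← Set.image_univ, ← Finset.coe_univ,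
    ← Finset.coe_image, Nat.card_coe_set_eq, Set.ncard_coe_finset, Finset.card_univ,
    Fintype.card_fin]

section NormalBasis

variable {α : E} {b : Basis (Fin (finrank F E)) F E}
  (hb : ∀ i, b i = α ^ Fintype.card F ^ (i : ℕ))
include hb

theorem minpoly_frobeniusCombination_eq_iff {v w : Fin (finrank F E) → F} :
    minpoly F (frobeniusCombination α v) = minpoly F (frobeniusCombination α w) ↔
      ∃ k, v = fun i => w (i + k) := by
  have : NeZero (finrank F E) := .of_pos finrank_pos
  rw [minpoly_eq_iff_exists_eq_pow_card_pow, neg_surjective.exists]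
  simp only [frobeniusCombination_pow_card_pow (pow_card_pow_finrank α),
    (bijective_frobeniusCombination hb).injective.eq_iff, sub_neg_eq_add]

theorem natDegree_minpoly_frobeniusCombination_eq_finrank_iff (w : Fin (finrank F E) → F) :
    (minpoly F (frobeniusCombination α w)).natDegree = finrank F E ↔
      Function.Injective fun k : Fin (finrank F E) => fun i => w (i + k) := by
  have : NeZero (finrank F E) := .of_pos finrank_pos
  rw [natDegree_minpoly_eq_finrank_iff, ← (Equiv.neg _).injective_comp,
    ← (bijective_frobeniusCombination hb).injective.of_comp_iff]
  simp only [Function.comp_def, Equiv.neg_apply,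
    frobeniusCombination_pow_card_pow (pow_card_pow_finrank α), sub_neg_eq_add]

end NormalBasis

end FiniteField

theorem stmt4_general {F E : Type*} [Field F] [Fintype F] [LinearOrder F] [Field E] [Algebra F E]
    (n : ℕ) (hdim : Module.finrank F E = n)
    (α : E) (b : Module.Basis (Fin n) F E)
    (hb : ∀ i : Fin n, b i = α ^ (Fintype.card F) ^ (i : ℕ)) :
    Set.BijOn
      (fun lam : Fin n → F =>
        minpoly F (∑ i : Fin n, lam i • α ^ (Fintype.card F) ^ (i : ℕ)))
      {lam : Fin n → F | IsLyndonWord lam}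
      {p : Polynomial F | p.Monic ∧ Irreducible p ∧ p.natDegree = n} := by
  subst hdim
  have : Module.Finite F E := .of_basis b
  have : Finite E := Module.finite_of_finite F
  have : NeZero (finrank F E) := .of_pos finrank_pos
  refine ⟨fun w hw => ?_, fun v hv w hw hvw => ?_, fun P ⟨hP, hirr, hdeg⟩ => ?_⟩
  · exact ⟨minpoly.monic (.of_finite F _), minpoly.irreducible (.of_finite F _),
      (FiniteField.natDegree_minpoly_frobeniusCombination_eq_finrank_iff hb w).mpr
        hw.injective_rotate⟩
  · obtain ⟨k, rfl⟩ := (FiniteField.minpoly_frobeniusCombination_eq_iff hb).mp hvw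
    exact hw.rotate_eq_self hv
  · obtain ⟨x, hx⟩ :=
      exists_minpoly_eq_of_natDegree_dvd_finrank (E := E) hP hirr (hdeg ▸ dvd_rfl)
    obtain ⟨w, rfl⟩ := (FiniteField.bijective_frobeniusCombination hb).surjective x
    obtain ⟨k, hk⟩ := exists_isLyndonWord_rotate
      ((FiniteField.natDegree_minpoly_frobeniusCombination_eq_finrank_iff hb w).mp (hx ▸ hdeg))
    exact ⟨_, hk,
      ((FiniteField.minpoly_frobeniusCombination_eq_iff hb).mpr ⟨k, rfl⟩).trans hx⟩

/-- The map sending a Lyndon word `λ` of length `n` to the minimal polynomial of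
`γ(λ) = ∑ λ i • α^{q^i}` is a bijection onto the monic irreducible polynomials of
degree `n` over `F_q`. -/
theorem stmt4 {F E : Type*} [Field F] [Fintype F] [LinearOrder F] [Field E] [Algebra F E]
    (n : ℕ) (hn : 0 < n) (hdim : Module.finrank F E = n)
    (α : E) (b : Module.Basis (Fin n) F E)
    (hb : ∀ i : Fin n, b i = α ^ (Fintype.card F) ^ (i : ℕ)) :
    Set.BijOn
      (fun lam : Fin n → F =>
        minpoly F (∑ i : Fin n, lam i • α ^ (Fintype.card F) ^ (i : ℕ)))
      {lam : Fin n → F | IsLyndonWord lam}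
      {p : Polynomial F | p.Monic ∧ Irreducible p ∧ p.natDegree = n} :=
  stmt4_general n hdim α b hb
end

section
/- Let w be a Lyndon word of length m < n over Σ = {0 < 1 < ⋯ < q−1} that is not equal to (q−1)^m. Define D(w) to be the length-n word w^h w' where w' is the prefix of w of length n mod m (and h = ⌈n/m⌉ adjusted accordingly), and if D(w) = u·b·(q−1)^t with b ≠ q−1 then define N(w) = u·(b+1). Then |N(w)| > |w|. -/
/-!
Suppose `|N(w)| = |u| + 1 ≤ m`. Since `D(w)` has period `m`, its letter `b` at position `|u| < m`
is `w[|u|]`, and its letter at position `m < n`, which lies in the final block `(q-1)^t`, is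
`w[0] = q-1`. A Lyndon word is smaller than each of its rotations, so its first letter is its
least one; hence `q-1 = w[0] ≤ w[|u|] = b`, contradicting `b ≠ q-1`.
-/

def IsLyndonList {A : Type*} [LinearOrder A] (w : List A) : Prop :=
  ∀ i, 0 < i → i < w.length → w < w.rotate i

theorem List.getElem_zero_le_of_lt {A : Type*} [Preorder A] {l₁ l₂ : List A} (h : l₁ < l₂)
    (h₁ : 0 < l₁.length) (h₂ : 0 < l₂.length) : l₁[0] ≤ l₂[0] := by
  match l₁, l₂, h₁, h₂ with
  | _ :: _, _ :: _, _, _ => exact List.head_le_of_lt h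

theorem IsLyndonList.getElem_zero_le {A : Type*} [LinearOrder A] {w : List A}
    (hw : IsLyndonList w) {k : ℕ} (hk : k < w.length) : w[0] ≤ w[k] := by
  rcases Nat.eq_zero_or_pos k with rfl | hk0
  · exact le_rfl
  have h := List.getElem_zero_le_of_lt (hw k hk0 hk) (by omega) (by simp; omega)
  rw [List.getElem_rotate, zero_add] at h
  simpa only [Nat.mod_eq_of_lt hk] using h

theorem List.getElem?_flatten_replicate {α : Type*} (w : List α) {n i : ℕ}
    (hi : i < n * w.length) : (replicate n w).flatten[i]? = w[i % w.length]? := by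
  induction n generalizing i with
  | zero => simp at hi
  | succ n ih =>
    rw [replicate_succ, flatten_cons]
    rcases lt_or_ge i w.length with h | h
    · rw [getElem?_append_left h, Nat.mod_eq_of_lt h]
    · rw [getElem?_append_right h, ih (by rw [Nat.succ_mul] at hi; omega),
        ← Nat.mod_eq_sub_mod h]

/-- Duval's step increases length: if `w` is a Lyndon word of length `m < n`,
`w ≠ (q-1)^m`, `D(w)` is the length-`n` prefix of `w^∞`, and
`D(w) = u·b·(q-1)^t` with `b ≠ q-1`, then `N(w) = u·(b+1)` has length `> m`. -/
theorem stmt7 (q n m : ℕ) (hq : 0 < q) (hmn : m < n)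
    (w : List (Fin q)) (hwlen : w.length = m) (hw : IsLyndonList w)
    (u : List (Fin q)) (b : Fin q) (t : ℕ) (hb : (b : ℕ) ≠ q - 1)
    (hD : ((List.replicate n w).flatten).take n =
        u ++ [b] ++ List.replicate t (⟨q - 1, by omega⟩ : Fin q)) :
    m < (u ++ [(⟨(b : ℕ) + 1, by have := b.isLt; omega⟩ : Fin q)]).length := by
  by_contra! hum
  rw [List.length_append, List.length_singleton] at hum
  have hnm : n ≤ n * m := Nat.le_mul_of_pos_right n (by omega)
  have hn : n = u.length + 1 + t := by
    have hlen := congrArg List.length hD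
    simp only [List.length_take, List.length_flatten, List.map_replicate, List.sum_replicate,
      smul_eq_mul, hwlen, min_eq_left hnm, List.length_append, List.length_singleton,
      List.length_replicate] at hlen
    omega
  have hD_getElem? {i : ℕ} (hi : i < n) :
      (u ++ [b] ++ List.replicate t (⟨q - 1, by omega⟩ : Fin q))[i]? = w[i % m]? := by
    rw [← hD, List.getElem?_take_of_lt hi,
      List.getElem?_flatten_replicate w (by rw [hwlen]; omega), hwlen]
  obtain ⟨hk, hwk⟩ : ∃ h : u.length < w.length, w[u.length] = b := by
    rw [← List.getElem?_eq_some_iff, ← Nat.mod_eq_of_lt hum, ← hD_getElem? (by omega)]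
    simp
  obtain ⟨_, hw0⟩ : ∃ h : 0 < w.length, w[0] = (⟨q - 1, by omega⟩ : Fin q) := by
    rw [← List.getElem?_eq_some_iff, ← Nat.mod_self m, ← hD_getElem? hmn,
      List.getElem?_append_right (by rw [List.length_append, List.length_singleton]; omega),
      List.getElem?_replicate]
    simp only [Option.ite_none_right_eq_some, List.length_append, List.length_singleton,
      and_true]
    omega
  have hle : q - 1 ≤ (b : ℕ) := by simpa [hwk, hw0, Fin.le_def] using hw.getElem_zero_le hk
  omega
end

section
/- In Duval's successor step: if w = u·b·(q−1)^t is a Lyndon word of length n with b ≠ q−1 and t ≥ 1, then u·(b+1) is also a Lyndon word. -/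
namespace List

variable {α : Type*}

theorem rotate_append_of_le_length {u : List α} (x : List α) {i : ℕ} (hi : i ≤ u.length) :
    (u ++ x).rotate i = u.drop i ++ x ++ u.take i := by
  rw [rotate_eq_drop_append_take (by simp; omega), drop_append_of_le_length hi,
    take_append_of_le_length hi]

theorem append_cons_lt_append_cons_of_lt [LinearOrder α] {b c : α} (hbc : b < c)
    (R R' S S' : List α) :
    ∀ {u d : List α}, d.length < u.length → u ++ b :: R < d ++ b :: R' →
      u ++ c :: S < d ++ c :: S'
  | a :: _, [], _, h => by
    have hab : a ≤ b := (cons_lt_cons_iff.mp h).elim le_of_lt fun h => h.1.le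
    exact cons_lt_cons_iff.mpr (Or.inl (hab.trans_lt hbc))
  | a :: _, e :: _, hlen, h => by
    rcases cons_lt_cons_iff.mp h with hae | ⟨rfl, htail⟩
    · exact cons_lt_cons_iff.mpr (Or.inl hae)
    · exact cons_lt_cons_iff.mpr
        (Or.inr ⟨rfl, append_cons_lt_append_cons_of_lt hbc R R' S S' (by simpa using hlen) htail⟩)

end List

theorem IsLyndonList.append_singleton_of_lt {α : Type*} [LinearOrder α] {u R : List α}
    {b c : α} (hw : IsLyndonList (u ++ b :: R)) (hbc : b < c) : IsLyndonList (u ++ [c]) := by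
  intro i hi hiu
  have hiu : i ≤ u.length := by simpa [Nat.lt_succ_iff] using hiu
  have hrot := hw i hi (by simp; omega)
  rw [List.rotate_append_of_le_length _ hiu, List.append_assoc, List.cons_append] at hrot
  rw [List.rotate_append_of_le_length _ hiu, List.append_assoc, List.singleton_append]
  exact List.append_cons_lt_append_cons_of_lt hbc _ _ _ _ (by simp; omega) hrot

theorem stmt8 (q : ℕ) (hq : 0 < q) (u : List (Fin q))
    (b : Fin q) (hb : (b : ℕ) ≠ q - 1) (t : ℕ)
    (hw : IsLyndonList (u ++ [b] ++ List.replicate t (⟨q - 1, by omega⟩ : Fin q))) :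
    IsLyndonList (u ++ [(⟨(b : ℕ) + 1, by have := b.isLt; omega⟩ : Fin q)]) := by
  rw [List.append_assoc, List.singleton_append] at hw
  exact hw.append_singleton_of_lt (Fin.lt_def.mpr (Nat.lt_succ_self _))
end

section
/- The number of Lyndon words of length n over a q-letter alphabet that end with the symbol q−2 is at most the number of Lyndon words of length n that end with the maximal symbol q−1 (equivalently, at most ℓ_{n,1} + ℓ_{n,2} + ⋯ + ℓ_{n,n−1}). -/
namespace List

variable {A : Type*}

theorem append_singleton_lt_append_cons_of_le [LinearOrder A] {b m : A} (hbm : b ≤ m)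
    {t : List A} :
    ∀ {p s : List A}, s.length < p.length → p ++ [b] < s ++ b :: t → p ++ [m] < s ++ m :: t
  | [], _, hlen, _ => absurd hlen (Nat.not_lt_zero _)
  | c :: p, [], _, h => by
    rcases cons_lt_cons_iff.mp h with hcb | ⟨rfl, _⟩
    · exact cons_lt_cons_iff.mpr (Or.inl (hcb.trans_le hbm))
    · rcases hbm.lt_or_eq with hcm | rfl
      · exact cons_lt_cons_iff.mpr (Or.inl hcm)
      · exact h
  | c :: p, d :: s, hlen, h => by
    rcases cons_lt_cons_iff.mp h with hcd | ⟨rfl, htail⟩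
    · exact cons_lt_cons_iff.mpr (Or.inl hcd)
    · exact cons_lt_cons_iff.mpr
        (Or.inr ⟨rfl, append_singleton_lt_append_cons_of_le hbm (by simpa using hlen) htail⟩)

theorem rotate_append_singleton {u : List A} {i : ℕ} (x : A) (hi : i ≤ u.length) :
    (u ++ [x]).rotate i = u.drop i ++ x :: u.take i := by
  rw [rotate_eq_drop_append_take (by simp; omega), drop_append_of_le_length hi,
    take_append_of_le_length hi, append_assoc, singleton_append]

end List

theorem IsLyndonList.append_singleton_of_le {A : Type*} [LinearOrder A] {u : List A} {b m : A}
    (hbm : b ≤ m) (h : IsLyndonList (u ++ [b])) : IsLyndonList (u ++ [m]) := by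
  intro i hi hiu
  simp only [List.length_append, List.length_singleton] at hiu
  have hrot := h i hi (by simpa using hiu)
  rw [List.rotate_append_singleton _ (by omega)] at hrot ⊢
  exact List.append_singleton_lt_append_cons_of_le hbm (by simp; omega) hrot

theorem ncard_lyndon_append_singleton_le {A : Type*} [LinearOrder A] [Finite A] (n : ℕ)
    {b m : A} (hbm : b ≤ m) :
    Set.ncard {w : List A | w.length = n ∧ IsLyndonList w ∧ ∃ u, w = u ++ [b]} ≤
      Set.ncard {w : List A | w.length = n ∧ IsLyndonList w ∧ ∃ u, w = u ++ [m]} := by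
  refine Set.ncard_le_ncard_of_injOn (fun w => w.dropLast ++ [m]) ?_ ?_
    ((List.finite_length_eq A n).subset fun w hw => hw.1)
  · rintro _ ⟨hlen, hlyn, u, rfl⟩
    simp only [List.dropLast_concat]
    exact ⟨by simpa using hlen, hlyn.append_singleton_of_le hbm, u, rfl⟩
  · rintro _ ⟨-, -, u, rfl⟩ _ ⟨-, -, u', rfl⟩ huu'
    simpa using huu'

/-- The number of Lyndon words of length `n` ending with the symbol `q-2` is at most
the number of Lyndon words of length `n` ending with the maximal symbol `q-1`. -/
theorem stmt11 (q n : ℕ) (hq : 2 ≤ q) :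
    Set.ncard {w : List (Fin q) | w.length = n ∧ IsLyndonList w ∧
        ∃ u, w = u ++ [(⟨q - 2, by omega⟩ : Fin q)]} ≤
      Set.ncard {w : List (Fin q) | w.length = n ∧ IsLyndonList w ∧
        ∃ u, w = u ++ [(⟨q - 1, by omega⟩ : Fin q)]} :=
  ncard_lyndon_append_singleton_le n (Fin.mk_le_mk.mpr (by omega))
end
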